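/- arXiv:2407.05392 — 2 statements merged into one kernel-verified Lean document; each statement's English description precedes it below -/
import Mathlib

section
/- For an observable M with n effects M_1,…,M_n on a finite-dimensional Hilbert space, the optimal average success probability of labeling over all strategies (including entanglement-assisted ones) is p_s = (1/(n-1)!) · α_M, where α_M = max over density operators ρ and indices j of Tr[ρ M_j]; i.e., entanglement assistance does not improve over the simple scheme. -/
/-!
For a positive operator `H`, normalizing `Hᵀ` to a density operator shows
`Re Tr[M_kᵀ H] ≤ α_M · Re Tr H`. Summing over `k` and `π`, the normalization
`∑_π H_i^{(π)} = ρ` makes the total weight `∑_π ∑_k Tr H_{π k}^{(π)}` equal to `n`, so the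
success probability is at most `n α_M / n! = α_M / (n-1)!`. The bound is attained without
entanglement, since exactly `(n-1)!` permutations send an optimal index `j` to a given label.
-/

open Matrix Finset Equiv
open scoped ComplexOrder

def IsDensity {d : ℕ} (ρ : Matrix (Fin d) (Fin d) ℂ) : Prop :=
  ρ.PosSemidef ∧ ρ.trace = 1

open scoped Nat

namespace Equiv.Perm

variable {α : Type*} [Fintype α] [DecidableEq α]

theorem card_filter_apply_eq (a b : α) :
    #{π : Perm α | π a = b} = (Fintype.card α - 1)! := by
  have hfiber (c : α) : #{π : Perm α | π a = c} = #{π : Perm α | π a = b} :=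
    card_nbij' (swap c b * ·) (swap c b * ·) (fun π hπ => by simp_all) (fun π hπ => by simp_all)
      (fun π _ => by simp [← mul_assoc]) (fun π _ => by simp [← mul_assoc])
  have hpos : 0 < Fintype.card α := Fintype.card_pos_iff.mpr ⟨a⟩
  refine Nat.eq_of_mul_eq_mul_left hpos (Eq.trans ?_ (Nat.mul_factorial_pred hpos.ne').symm)
  calc Fintype.card α * #{π : Perm α | π a = b} = ∑ c, #{π : Perm α | π a = c} := by
        simp [hfiber]
    _ = (Fintype.card α)! := by
        rw [← card_eq_sum_card_fiberwise (by simp), card_univ, Fintype.card_perm]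

end Equiv.Perm

theorem IsDensity.transpose {d : ℕ} {ρ : Matrix (Fin d) (Fin d) ℂ} (hρ : IsDensity ρ) :
    IsDensity ρᵀ :=
  ⟨hρ.1.transpose, by rw [trace_transpose, hρ.2]⟩

theorem Matrix.PosSemidef.trace_eq_ofReal_re {ι : Type*} [Fintype ι] {A : Matrix ι ι ℂ}
    (hA : A.PosSemidef) :
    A.trace = (A.trace.re : ℂ) :=
  Complex.eq_re_of_ofReal_le (r := 0) (by exact_mod_cast hA.trace_nonneg)

theorem isDensity_inv_trace_smul {d : ℕ} {H : Matrix (Fin d) (Fin d) ℂ} (hH : H.PosSemidef)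
    (h0 : H.trace ≠ 0) : IsDensity (H.trace⁻¹ • H) :=
  ⟨hH.smul (inv_nonneg.mpr hH.trace_nonneg), by rw [trace_smul, smul_eq_mul, inv_mul_cancel₀ h0]⟩

theorem re_trace_transpose_mul_le {d : ℕ} {A H : Matrix (Fin d) (Fin d) ℂ} {α : ℝ}
    (hA : ∀ ρ, IsDensity ρ → (ρ * A).trace.re ≤ α) (hH : H.PosSemidef) :
    (Aᵀ * H).trace.re ≤ α * H.trace.re := by
  by_cases h0 : H.trace = 0
  · simp [hH.trace_eq_zero_iff.mp h0]
  have hpos : 0 < H.trace.re := (Complex.pos_iff.mp (hH.trace_nonneg.lt_of_ne' h0)).1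
  have hρ := hA _ (isDensity_inv_trace_smul hH.transpose (by rwa [trace_transpose]))
  rw [trace_transpose, smul_mul, trace_smul, smul_eq_mul, hH.trace_eq_ofReal_re,
    ← Complex.ofReal_inv, Complex.re_ofReal_mul, ← trace_transpose_mul, transpose_transpose,
    trace_mul_comm] at hρ
  rwa [inv_mul_le_iff₀ hpos, mul_comm] at hρ

section Labeling

variable {d : ℕ} {ι : Type*} [Fintype ι] [DecidableEq ι]

theorem sum_perm_sum_re_trace_apply {H : ι → Perm ι → Matrix (Fin d) (Fin d) ℂ}
    {ρ : Matrix (Fin d) (Fin d) ℂ} (hsum : ∀ i, ∑ π, H i π = ρ) (hρ : ρ.trace = 1) :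
    ∑ π : Perm ι, ∑ k, (H (π k) π).trace.re = Fintype.card ι := by
  calc ∑ π : Perm ι, ∑ k, (H (π k) π).trace.re
      = ∑ π : Perm ι, ∑ i, (H i π).trace.re :=
        sum_congr rfl fun π _ => Equiv.sum_comp π fun i => (H i π).trace.re
    _ = ∑ i, ∑ π : Perm ι, (H i π).trace.re := sum_comm
    _ = Fintype.card ι := by
        simp [← Complex.re_sum, ← trace_sum, hsum, hρ]

theorem sum_perm_sum_re_trace_le {M : ι → Matrix (Fin d) (Fin d) ℂ} {α : ℝ}
    (hM : ∀ ρ, IsDensity ρ → ∀ j, (ρ * M j).trace.re ≤ α)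
    {H : ι → Perm ι → Matrix (Fin d) (Fin d) ℂ} {ρ : Matrix (Fin d) (Fin d) ℂ}
    (hH : ∀ i π, (H i π).PosSemidef) (hsum : ∀ i, ∑ π, H i π = ρ) (hρ : ρ.trace = 1) :
    ∑ π : Perm ι, ∑ k, ((M k)ᵀ * H (π k) π).trace.re ≤ Fintype.card ι * α :=
  calc ∑ π : Perm ι, ∑ k, ((M k)ᵀ * H (π k) π).trace.re
      ≤ ∑ π : Perm ι, ∑ k, α * (H (π k) π).trace.re := by
        gcongr with π _ k _
        exact re_trace_transpose_mul_le (fun ρ hρ => hM ρ hρ k) (hH _ _)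
    _ = Fintype.card ι * α := by
        simp_rw [← mul_sum, sum_perm_sum_re_trace_apply hsum hρ, mul_comm]

/-- The strategy that does not use entanglement: the unknown device is fed `ρ`, and when it
outputs the label `i`, a permutation `π` with `π j = i` is guessed uniformly at random. -/
noncomputable def simpleTester (ρ : Matrix (Fin d) (Fin d) ℂ) (j i : ι) (π : Perm ι) :
    Matrix (Fin d) (Fin d) ℂ :=
  if π j = i then ((Fintype.card ι - 1)! : ℂ)⁻¹ • ρᵀ else 0

theorem simpleTester_posSemidef {ρ : Matrix (Fin d) (Fin d) ℂ} (hρ : ρ.PosSemidef) (j i : ι)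
    (π : Perm ι) : (simpleTester ρ j i π).PosSemidef := by
  unfold simpleTester
  split_ifs
  · exact hρ.transpose.smul (by positivity)
  · exact .zero

theorem sum_simpleTester (ρ : Matrix (Fin d) (Fin d) ℂ) (j i : ι) :
    ∑ π, simpleTester ρ j i π = ρᵀ := by
  unfold simpleTester
  rw [← sum_filter, sum_const, Perm.card_filter_apply_eq, ← Nat.cast_smul_eq_nsmul ℂ,
    smul_smul, mul_inv_cancel₀ (by exact_mod_cast (Fintype.card ι - 1).factorial_ne_zero), one_smul]

theorem sum_re_trace_simpleTester (M : ι → Matrix (Fin d) (Fin d) ℂ)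
    (ρ : Matrix (Fin d) (Fin d) ℂ) (j : ι) (π : Perm ι) :
    ∑ k, ((M k)ᵀ * simpleTester ρ j (π k) π).trace.re
      = ((Fintype.card ι - 1)! : ℝ)⁻¹ * (ρ * M j).trace.re := by
  simp only [simpleTester, π.apply_eq_iff_eq]
  rw [sum_eq_single_of_mem j (mem_univ j) fun k _ hk => by simp [Ne.symm hk]]
  simp [trace_smul, trace_transpose_mul, trace_mul_comm (M j)]

end Labeling

theorem entanglement_does_not_improve_labeling_general
    {d n : ℕ} [NeZero n]
    (M : Fin n → Matrix (Fin d) (Fin d) ℂ)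
    (α : ℝ)
    (hα : IsGreatest { a : ℝ | ∃ (ρ : Matrix (Fin d) (Fin d) ℂ) (j : Fin n),
            IsDensity ρ ∧ a = ((ρ * M j).trace).re } α) :
    IsGreatest
      { s : ℝ | ∃ (H : Fin n → Equiv.Perm (Fin n) → Matrix (Fin d) (Fin d) ℂ)
          (ρ : Matrix (Fin d) (Fin d) ℂ),
          IsDensity ρ ∧ (∀ i π, (H i π).PosSemidef) ∧
          (∀ i, ∑ π : Equiv.Perm (Fin n), H i π = ρ) ∧
          s = ((Nat.factorial n : ℝ))⁻¹ * ∑ π : Equiv.Perm (Fin n),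
            ∑ k, (((M k)ᵀ * H (π k) π).trace).re }
      (((Nat.factorial (n - 1) : ℝ))⁻¹ * α) := by
  refine ⟨?_, ?_⟩
  · obtain ⟨ρ, j, hρ, rfl⟩ := hα.1
    refine ⟨simpleTester ρ j, ρᵀ, hρ.transpose, simpleTester_posSemidef hρ.1 j,
      sum_simpleTester ρ j, ?_⟩
    simp_rw [sum_re_trace_simpleTester, sum_const, card_univ, Fintype.card_perm, Fintype.card_fin,
      nsmul_eq_mul]
    field_simp
  · rintro s ⟨H, ρ, hρ, hH, hsum, rfl⟩
    have hbound := sum_perm_sum_re_trace_le (fun ρ hρ j => hα.2 ⟨ρ, j, hρ, rfl⟩) hH hsum hρ.2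
    rw [Fintype.card_fin] at hbound
    calc (n ! : ℝ)⁻¹ * ∑ π : Perm (Fin n), ∑ k, ((M k)ᵀ * H (π k) π).trace.re
        ≤ (n ! : ℝ)⁻¹ * (n * α) := by gcongr
      _ = ((n - 1)! : ℝ)⁻¹ * α := by
        have hn : (n : ℝ) ≠ 0 := by exact_mod_cast NeZero.ne n
        rw [← Nat.mul_factorial_pred (NeZero.ne n), Nat.cast_mul]
        field_simp

/-- Entanglement assistance does not help labeling: for an `n`-effect observable the
optimal average success probability over all 1-tester (entanglement-assisted)
strategies `T_π = ∑ i H_i^{(π)} ⊗ |i⟩⟨i|`, `∑_π H_i^{(π)} = ρ`, equals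
`(1/(n-1)!) ⬝ α_M`, where `α_M` is the maximum of `Tr[ρ M_j]` over density
operators `ρ` and indices `j`.  (The success probability of such a tester is
`(1/n!) ∑_π Tr[Φ_π T_π] = (1/n!) ∑_π ∑_k Tr[(M k)ᵀ (H_{π k}^{(π)})ᵀ]ᵀ`, written
below without explicit tensor products.) -/
theorem entanglement_does_not_improve_labeling
    {d n : ℕ} [NeZero n]
    (M : Fin n → Matrix (Fin d) (Fin d) ℂ)
    (hM : ∀ j, (M j).PosSemidef) (hMsum : ∑ j, M j = 1)
    (α : ℝ)
    (hα : IsGreatest { a : ℝ | ∃ (ρ : Matrix (Fin d) (Fin d) ℂ) (j : Fin n),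
            IsDensity ρ ∧ a = ((ρ * M j).trace).re } α) :
    IsGreatest
      { s : ℝ | ∃ (H : Fin n → Equiv.Perm (Fin n) → Matrix (Fin d) (Fin d) ℂ)
          (ρ : Matrix (Fin d) (Fin d) ℂ),
          IsDensity ρ ∧ (∀ i π, (H i π).PosSemidef) ∧
          (∀ i, ∑ π : Equiv.Perm (Fin n), H i π = ρ) ∧
          s = ((Nat.factorial n : ℝ))⁻¹ * ∑ π : Equiv.Perm (Fin n),
            ∑ k, (((M k)ᵀ * H (π k) π).trace).re }
      (((Nat.factorial (n - 1) : ℝ))⁻¹ * α) :=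
  entanglement_does_not_improve_labeling_general M α hα
end

section
/- Under the hypotheses of the single-shot unambiguous labeling setup with n = 3 distinct effects: the no-error conditions Tr[Φ_{π'} T_π] = 0 for all π ≠ π' force Tr[ρ M_1] = Tr[ρ M_2] = Tr[ρ M_3] = 0, hence Tr[ρ] = 0, contradicting that ρ is a density operator. -/
/-!
Every summand of a no-error condition is the trace of a product of two positive semidefinite
matrices, hence nonnegative, so each summand `Tr[M_kᵀ H_{π' k}^{(π)}]` vanishes. With at least
three outcomes, any pair `(k, j)` is realised as `π' k = j` by some `π' ≠ π`, so
`Tr[M_kᵀ H_j^{(π)}] = 0` for all `k`; summing over `k` with `∑ M_k = 1` gives `Tr H_j^{(π)} = 0`,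
hence `H_j^{(π)} = 0`, and then `ρ = ∑_π H_j^{(π)} = 0` cannot have unit trace.
-/

open Matrix Finset Equiv
open scoped ComplexOrder

theorem Matrix.PosSemidef.trace_mul_nonneg {𝕜 n : Type*} [RCLike 𝕜] [Fintype n]
    {A B : Matrix n n 𝕜} (hA : A.PosSemidef) (hB : B.PosSemidef) : 0 ≤ (A * B).trace := by
  classical
  open scoped MatrixOrder Matrix.Norms.L2Operator in
  obtain ⟨C, rfl⟩ := CStarAlgebra.nonneg_iff_eq_star_mul_self.mp hB.nonneg
  rw [star_eq_conjTranspose, ← Matrix.mul_assoc, trace_mul_cycle]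
  exact (hA.mul_mul_conjTranspose_same C).trace_nonneg

theorem Equiv.Perm.exists_ne_apply_eq {α : Type*} [Fintype α] [DecidableEq α]
    (hα : 2 < Fintype.card α) (π : Perm α) (k j : α) : ∃ π' : Perm α, π' ≠ π ∧ π' k = j := by
  by_cases hπ : swap k j = π
  · obtain ⟨a, ha, b, hb, hab⟩ := (Finset.one_lt_card (s := univ.erase j)).mp
      (by rw [card_erase_of_mem (mem_univ j), card_univ]; omega)
    refine ⟨swap a b * swap k j, fun h => hab ?_, ?_⟩
    · rw [← hπ, mul_eq_right, swap_eq_one_iff] at h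
      exact h
    · rw [Perm.mul_apply, swap_apply_left,
        swap_apply_of_ne_of_ne (ne_of_mem_erase ha).symm (ne_of_mem_erase hb).symm]
  · exact ⟨swap k j, hπ, swap_apply_left k j⟩

theorem Matrix.sum_trace_transpose_mul_of_sum_eq_one {ι 𝕜 n : Type*} [Fintype ι] [Fintype n]
    [DecidableEq n] [CommSemiring 𝕜] {M : ι → Matrix n n 𝕜} (hM : ∑ k, M k = 1)
    (A : Matrix n n 𝕜) : ∑ k, ((M k)ᵀ * A).trace = A.trace := by
  rw [← trace_sum, ← sum_mul, ← transpose_sum, hM, transpose_one, one_mul]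

theorem tester_eq_zero_of_no_error {ι 𝕜 n : Type*} [Fintype ι] [DecidableEq ι] [RCLike 𝕜]
    [Fintype n] [DecidableEq n] (hι : 2 < Fintype.card ι) {M : ι → Matrix n n 𝕜}
    (hM : ∀ k, (M k).PosSemidef) (hMsum : ∑ k, M k = 1) {H : ι → Perm ι → Matrix n n 𝕜}
    (hH : ∀ k π, (H k π).PosSemidef)
    (hNoError : ∀ π π' : Perm ι, π ≠ π' → ∑ k, ((M k)ᵀ * H (π' k) π).trace = 0)
    (j : ι) (π : Perm ι) : H j π = 0 := by
  have hterm (π' : Perm ι) (hne : π ≠ π') (k : ι) : ((M k)ᵀ * H (π' k) π).trace = 0 :=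
    (sum_eq_zero_iff_of_nonneg fun k _ => (hM k).transpose.trace_mul_nonneg (hH _ π)).mp
      (hNoError π π' hne) k (mem_univ k)
  refine (hH j π).trace_eq_zero_iff.mp ?_
  rw [← sum_trace_transpose_mul_of_sum_eq_one hMsum]
  refine sum_eq_zero fun k _ => ?_
  obtain ⟨π', hne, rfl⟩ := Perm.exists_ne_apply_eq hι π k j
  exact hterm π' (Ne.symm hne) k

theorem three_effect_unambiguous_contradiction_general
    {d : ℕ}
    (M : Fin 3 → Matrix (Fin d) (Fin d) ℂ)
    (hM : ∀ j, (M j).PosSemidef) (hMsum : ∑ j, M j = 1)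
    (ρ' : Matrix (Fin d) (Fin d) ℂ) (hρ : IsDensity ρ')
    (H : Fin 3 → Equiv.Perm (Fin 3) → Matrix (Fin d) (Fin d) ℂ)
    (hH : ∀ k π, (H k π).PosSemidef)
    (hHsum : ∀ k, ∑ π : Equiv.Perm (Fin 3), H k π = ρ')
    (hNoError : ∀ π π' : Equiv.Perm (Fin 3), π ≠ π' →
      ∑ k, ((M k)ᵀ * H (π' k) π).trace = 0) :
    (∀ j, (ρ' * M j).trace = 0) ∧ ρ'.trace = 0 ∧ False := by
  have hρ0 : ρ' = 0 := by
    rw [← hHsum 0]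
    exact sum_eq_zero fun π _ => tester_eq_zero_of_no_error (by simp) hM hMsum hH hNoError 0 π
  have htrace := hρ.2
  rw [hρ0, trace_zero] at htrace
  exact ⟨fun j => by rw [hρ0, zero_mul, trace_zero], by rw [hρ0, trace_zero], zero_ne_one htrace⟩

/-- Single-shot unambiguous labeling for three distinct effects: the no-error
conditions `Tr[Φ_{π'} T_π] = 0` (for all `π ≠ π'`), for a tester
`T_π = ∑ k H_k^{(π)} ⊗ |k⟩⟨k|` with normalization `∑_π H_k^{(π)} = ρ`, force
`Tr[ρ M₁] = Tr[ρ M₂] = Tr[ρ M₃] = 0`, hence `Tr[ρ] = 0`, contradicting that `ρ`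
is a density operator. -/
theorem three_effect_unambiguous_contradiction
    {d : ℕ}
    (M : Fin 3 → Matrix (Fin d) (Fin d) ℂ)
    (hM : ∀ j, (M j).PosSemidef) (hMsum : ∑ j, M j = 1)
    (hMdist : ∀ j j', j ≠ j' → M j ≠ M j')
    (ρ' : Matrix (Fin d) (Fin d) ℂ) (hρ : IsDensity ρ')
    (H : Fin 3 → Equiv.Perm (Fin 3) → Matrix (Fin d) (Fin d) ℂ)
    (hH : ∀ k π, (H k π).PosSemidef)
    (hHsum : ∀ k, ∑ π : Equiv.Perm (Fin 3), H k π = ρ')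
    (hNoError : ∀ π π' : Equiv.Perm (Fin 3), π ≠ π' →
      ∑ k, ((M k)ᵀ * H (π' k) π).trace = 0) :
    (∀ j, (ρ' * M j).trace = 0) ∧ ρ'.trace = 0 ∧ False :=
  three_effect_unambiguous_contradiction_general M hM hMsum ρ' hρ H hH hHsum hNoError
end
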